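/- arXiv:2107.09164 — 6 statements merged into one kernel-verified Lean document; each statement's English description precedes it below -/
import Mathlib

section
/- Let m, s be positive integers with gcd(s, m) = 1 and let μ ∈ F_{2^{3m}}. Then the set of roots in F_{2^{3m}} of f_μ(x) = x^{2^{m+s}} + μ x^{2^s} + x forms an F_2-subspace of dimension at most 3. -/
/-!
Write `F j` for the restriction of `x ↦ x ^ 2 ^ j` to the root space `V`, viewed in the
`K`-vector space `Hom_{F₂}(V, K)`. Every `F₂`-linear map `V → K` extends to `K`, and the Frobenius
powers span `Hom_{F₂}(K, K)` over `K` (Dedekind independence plus a dimension count), so the `F j`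
span `Hom_{F₂}(V, K)`, whose `K`-dimension is `dim V`. Raising the root equation to the power `2 ^ i`
gives `F i = F (i + m + s) + μ ^ 2 ^ i • F (i + s)`, so the span `W j` of the `F i` with
`i ≡ j (mod m)` satisfies `W j ≤ W (j + s)`. As `W` is periodic mod `m` and `s` is invertible mod `m`,
all `W j` coincide; since `F` has period `3m`, `W 0` is spanned by `F 0, F m, F (2m)`, so `dim V ≤ 3`.
-/

open Module FiniteField Submodule

theorem apply_eq_apply_zero_of_le_add_of_modEq {α : Type*} [PartialOrder α] {f : ℕ → α}
    {m s : ℕ} (hm : 0 < m) (hsm : s.Coprime m) (hmod : ∀ i j, i ≡ j [MOD m] → f i = f j)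
    (hle : ∀ j, f j ≤ f (j + s)) (j : ℕ) : f j = f 0 := by
  have hmono : Monotone fun t => f (t * s) :=
    monotone_nat_of_le_succ fun t => by rw [Nat.succ_mul]; exact hle _
  have hper : Function.Periodic (fun t => f (t * s)) m := fun t =>
    hmod _ _ (by rw [add_mul, Nat.ModEq, Nat.add_mul_mod_self_left])
  have hconst (t : ℕ) : f (t * s) = f 0 := by
    simpa using le_antisymm ((hmono (Nat.le_mul_of_pos_right t hm)).trans_eq (hper.nat_mul_eq t))
      (hmono t.zero_le)
  obtain ⟨r, hrs, hrj⟩ := Nat.chineseRemainder hsm 0 j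
  obtain ⟨t, rfl⟩ := Nat.modEq_zero_iff_dvd.1 hrs
  rw [← hmod _ _ hrj, mul_comm, hconst]

section Frobenius

variable {k L : Type*} [Field k] [Fintype k] [Field L] [Algebra k L]

variable (k L) in
theorem FiniteField.span_range_frobeniusAlgHom_pow [Finite L] :
    span L (Set.range fun j : ℕ => (frobeniusAlgHom k L ^ j).toLinearMap) = ⊤ := by
  have hli : LinearIndependent L
      fun j : Fin (finrank k L) => (frobeniusAlgHom k L ^ (j : ℕ)).toLinearMap :=
    (linearIndependent_algHom_toLinearMap k L L).comp _ (bijective_frobeniusAlgHom_pow k L).1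
  rw [eq_top_iff, ← hli.span_eq_top_of_card_eq_finrank' (by simp [finrank_linearMap_self])]
  exact span_mono (Set.range_comp_subset_range (fun j : Fin (finrank k L) => (j : ℕ))
    fun j => (frobeniusAlgHom k L ^ j).toLinearMap)

noncomputable def Submodule.frobeniusPow (V : Submodule k L) (j : ℕ) : V →ₗ[k] L :=
  (frobeniusAlgHom k L ^ j).toLinearMap ∘ₗ V.subtype

namespace Submodule

variable (V : Submodule k L)

theorem frobeniusPow_apply (j : ℕ) (v : V) : V.frobeniusPow j v = (v : L) ^ Fintype.card k ^ j := by
  simp [frobeniusPow, coe_frobeniusAlgHom, pow_iterate]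

theorem frobeniusPow_periodic [Fintype L] {n : ℕ} (hL : Fintype.card L = Fintype.card k ^ n) :
    Function.Periodic V.frobeniusPow n := fun j => by
  ext v
  rw [frobeniusPow_apply, frobeniusPow_apply, pow_add, pow_mul, ← hL, FiniteField.pow_card]

theorem span_range_frobeniusPow [Finite L] : span L (Set.range V.frobeniusPow) = ⊤ := by
  have hsurj : Function.Surjective (LinearMap.lcomp L L V.subtype) := fun f =>
    LinearMap.exists_extend f
  rw [← LinearMap.range_eq_top.mpr hsurj, LinearMap.range_eq_map,
    ← span_range_frobeniusAlgHom_pow k L, map_span, ← Set.range_comp]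
  rfl

theorem finrank_le_card_of_frobeniusPow_mem_span [Finite L] (I : Finset ℕ)
    (h : ∀ j, V.frobeniusPow j ∈ span L (V.frobeniusPow '' I)) : finrank k V ≤ I.card := by
  classical
  have htop : span L (V.frobeniusPow '' I) = ⊤ :=
    eq_top_iff.2 (V.span_range_frobeniusPow ▸ span_le.2 (Set.range_subset_iff.2 h))
  calc finrank k V = finrank L (V →ₗ[k] L) := (finrank_linearMap_self ..).symm
    _ = finrank L (span L (I.image V.frobeniusPow : Set (V →ₗ[k] L))) := by
      rw [Finset.coe_image, htop, finrank_top]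
    _ ≤ (I.image V.frobeniusPow).card := finrank_span_finset_le_card _
    _ ≤ I.card := Finset.card_image_le

noncomputable def frobeniusSpan (m j : ℕ) : Submodule L (V →ₗ[k] L) :=
  span L (V.frobeniusPow '' {i | i ≡ j [MOD m]})

theorem frobeniusSpan_congr {m i j : ℕ} (h : i ≡ j [MOD m]) :
    V.frobeniusSpan m i = V.frobeniusSpan m j := by
  simp only [frobeniusSpan]
  congr 2
  ext t
  exact ⟨fun ht => ht.trans h, fun ht => ht.trans h.symm⟩

theorem frobeniusPow_mem_frobeniusSpan (m j : ℕ) : V.frobeniusPow j ∈ V.frobeniusSpan m j :=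
  subset_span ⟨j, Nat.ModEq.refl j, rfl⟩

end Submodule

end Frobenius

section Trinomial

variable {k L : Type*} [Field k] [Fintype k] [Field L] [Algebra k L]

variable (k) in
noncomputable def linearizedTrinomial (m s : ℕ) (μ : L) : L →ₗ[k] L :=
  (frobeniusAlgHom k L ^ (m + s)).toLinearMap + μ • (frobeniusAlgHom k L ^ s).toLinearMap +
    LinearMap.id

theorem mem_ker_linearizedTrinomial {m s : ℕ} {μ x : L} :
    x ∈ LinearMap.ker (linearizedTrinomial k m s μ) ↔
      x ^ Fintype.card k ^ (m + s) + μ * x ^ Fintype.card k ^ s + x = 0 := by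
  simp [linearizedTrinomial, coe_frobeniusAlgHom, pow_iterate]

theorem frobeniusPow_add_smul_frobeniusPow_add {m s : ℕ} {μ : L} {V : Submodule k L}
    (hV : V ≤ LinearMap.ker (linearizedTrinomial k m s μ)) (i : ℕ) :
    V.frobeniusPow (i + (m + s)) + μ ^ Fintype.card k ^ i • V.frobeniusPow (i + s) +
      V.frobeniusPow i = 0 := by
  ext v
  have := congrArg (frobeniusAlgHom k L ^ i) (mem_ker_linearizedTrinomial.1 (hV v.2))
  simp only [map_add, map_mul, map_zero, AlgHom.coe_pow, coe_frobeniusAlgHom, pow_iterate,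
    ← pow_mul, ← pow_add] at this
  simpa [frobeniusPow_apply, add_comm i] using this

theorem frobeniusSpan_le_frobeniusSpan_add {m s : ℕ} {μ : L} {V : Submodule k L}
    (hV : V ≤ LinearMap.ker (linearizedTrinomial k m s μ)) (j : ℕ) :
    V.frobeniusSpan m j ≤ V.frobeniusSpan m (j + s) := by
  refine span_le.2 ?_
  rintro _ ⟨i, hi : i ≡ j [MOD m], rfl⟩
  rw [eq_neg_of_add_eq_zero_right (frobeniusPow_add_smul_frobeniusPow_add hV i)]
  refine neg_mem (add_mem (subset_span ⟨_, ?_, rfl⟩) (smul_mem _ _ (subset_span ⟨_, ?_, rfl⟩)))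
  · rw [← add_assoc, add_right_comm]
    exact Nat.ModEq.trans (Nat.add_mod_right _ _) (hi.add_right s)
  · exact hi.add_right s

theorem finrank_ker_linearizedTrinomial_le [Fintype L] {m s : ℕ} (hm : 0 < m)
    (hsm : s.Coprime m) (hL : Fintype.card L = Fintype.card k ^ (3 * m)) (μ : L) :
    finrank k (LinearMap.ker (linearizedTrinomial k m s μ)) ≤ 3 := by
  set V := LinearMap.ker (linearizedTrinomial k m s μ)
  have hW (j : ℕ) : V.frobeniusSpan m j = V.frobeniusSpan m 0 :=
    apply_eq_apply_zero_of_le_add_of_modEq hm hsm (fun _ _ => V.frobeniusSpan_congr)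
      (frobeniusSpan_le_frobeniusSpan_add le_rfl) j
  have h0 : V.frobeniusSpan m 0 ≤ span L (V.frobeniusPow '' ({0, m, 2 * m} : Finset ℕ)) := by
    refine span_le.2 ?_
    rintro _ ⟨i, hi, rfl⟩
    obtain ⟨t, rfl⟩ := Nat.modEq_zero_iff_dvd.1 hi
    rw [← (V.frobeniusPow_periodic hL).map_mod_nat, Nat.mul_comm 3, Nat.mul_mod_mul_left]
    have ht : t % 3 < 3 := Nat.mod_lt _ three_pos
    refine subset_span ⟨m * (t % 3), ?_, rfl⟩
    interval_cases t % 3 <;> simp [mul_comm]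
  calc finrank k V ≤ ({0, m, 2 * m} : Finset ℕ).card :=
        V.finrank_le_card_of_frobeniusPow_mem_span _ fun j =>
          h0 (hW j ▸ V.frobeniusPow_mem_frobeniusSpan m j)
    _ ≤ 3 := Finset.card_le_three

end Trinomial

theorem stmt1_general {K : Type*} [Field K] [Fintype K] (m s : ℕ) (hm : 0 < m)
    (hgcd : Nat.gcd s m = 1) (hK : Fintype.card K = 2 ^ (3 * m)) (μ : K) :
    (0 : K) ∈ {x : K | x ^ 2 ^ (m + s) + μ * x ^ 2 ^ s + x = 0} ∧
    (∀ x ∈ {x : K | x ^ 2 ^ (m + s) + μ * x ^ 2 ^ s + x = 0},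
      ∀ y ∈ {x : K | x ^ 2 ^ (m + s) + μ * x ^ 2 ^ s + x = 0},
        x + y ∈ {x : K | x ^ 2 ^ (m + s) + μ * x ^ 2 ^ s + x = 0}) ∧
    ∃ d : ℕ, d ≤ 3 ∧
      Nat.card {x : K | x ^ 2 ^ (m + s) + μ * x ^ 2 ^ s + x = 0} = 2 ^ d := by
  have : Fact (Nat.Prime 2) := ⟨Nat.prime_two⟩
  have : CharP K 2 := charP_of_card_eq_prime_pow hK
  let := ZMod.algebra K 2
  set V := LinearMap.ker (linearizedTrinomial (ZMod 2) m s μ)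
  have hV : {x : K | x ^ 2 ^ (m + s) + μ * x ^ 2 ^ s + x = 0} = V := by
    ext x
    rw [Set.mem_ofPred_eq, SetLike.mem_coe, mem_ker_linearizedTrinomial, ZMod.card]
  rw [hV]
  refine ⟨V.zero_mem, fun x hx y hy => V.add_mem hx hy, finrank (ZMod 2) V,
    finrank_ker_linearizedTrinomial_le hm hgcd (by rw [hK, ZMod.card]) μ, ?_⟩
  rw [SetLike.coe_sort_coe, natCard_eq_pow_finrank (K := ZMod 2), Nat.card_zmod]

/-- For `gcd(s,m) = 1` and `μ ∈ F_{2^{3m}}`, the set of roots of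
`f_μ(x) = x^{2^{m+s}} + μ x^{2^s} + x` in `F_{2^{3m}}` is an `F_2`-subspace of
dimension at most 3.  In characteristic 2, an `F_2`-subspace is exactly a subset
containing `0` and closed under addition, and its `F_2`-dimension is at most `3`
iff its cardinality is at most `2^3`. -/
theorem stmt1 {K : Type*} [Field K] [Fintype K] (m s : ℕ) (hm : 0 < m) (hs : 0 < s)
    (hgcd : Nat.gcd s m = 1) (hK : Fintype.card K = 2 ^ (3 * m)) (μ : K) :
    (0 : K) ∈ {x : K | x ^ 2 ^ (m + s) + μ * x ^ 2 ^ s + x = 0} ∧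
    (∀ x ∈ {x : K | x ^ 2 ^ (m + s) + μ * x ^ 2 ^ s + x = 0},
      ∀ y ∈ {x : K | x ^ 2 ^ (m + s) + μ * x ^ 2 ^ s + x = 0},
        x + y ∈ {x : K | x ^ 2 ^ (m + s) + μ * x ^ 2 ^ s + x = 0}) ∧
    ∃ d : ℕ, d ≤ 3 ∧
      Nat.card {x : K | x ^ 2 ^ (m + s) + μ * x ^ 2 ^ s + x = 0} = 2 ^ d :=
  stmt1_general m s hm hgcd hK μ
end

section
/- Let m, s be positive integers and let q = 2^m. Suppose μ ∈ F_{q^3} satisfies N_{q^3/q}(μ) := μ^{q^2+q+1} = 1. Then the F_2-dimension of the kernel of f_μ(x) = x^{2^{m+s}} + μ x^{2^s} + x in F_{q^3} is at most 2, provided gcd(s, m) = 1. -/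
section aux
variable {K : Type*} [Field K]

lemma period_mul' (r : K) {a : ℕ} (h : r ^ 2 ^ a = r) (k : ℕ) : r ^ 2 ^ (a * k) = r := by
  induction k with
  | zero => simp
  | succ n ih =>
      have e : (2:ℕ) ^ (a * (n+1)) = 2 ^ (a*n) * 2 ^ a := by
        rw [← pow_add]; ring_nf
      rw [e, pow_mul, ih, h]

lemma period_mod' (r : K) {a b : ℕ} (h1 : r ^ 2 ^ a = r) (h2 : r ^ 2 ^ b = r) :
    r ^ 2 ^ (b % a) = r := by
  have hb : (2:ℕ) ^ b = 2 ^ (a * (b / a)) * 2 ^ (b % a) := by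
    rw [← pow_add, Nat.div_add_mod]
  calc r ^ 2 ^ (b % a) = (r ^ 2 ^ (a * (b/a))) ^ 2 ^ (b % a) := by rw [period_mul' r h1]
  _ = r ^ 2 ^ b := by rw [← pow_mul, ← hb]
  _ = r := h2

lemma period_gcd' (r : K) (a b : ℕ) (h1 : r ^ 2 ^ a = r) (h2 : r ^ 2 ^ b = r) :
    r ^ 2 ^ (Nat.gcd a b) = r := by
  induction a, b using Nat.gcd.induction with
  | H0 n => simpa using h2
  | H1 a b ha ih =>
      rw [Nat.gcd_rec]
      exact ih (period_mod' r h1 h2) h1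

end aux

/-- Let `q = 2^m`, `gcd(s,m) = 1` and `μ ∈ F_{q^3}` with
`N_{q^3/q}(μ) = μ^{q^2+q+1} = 1`. Then the `F_2`-dimension of the kernel of
`f_μ(x) = x^{2^{m+s}} + μ x^{2^s} + x` is at most 2, i.e. the kernel has at
most `2^2` elements. -/
theorem stmt4 {K : Type*} [Field K] [Fintype K] (m s : ℕ) (hm : 0 < m) (hs : 0 < s)
    (hgcd : Nat.gcd s m = 1) (hK : Fintype.card K = 2 ^ (3 * m)) (μ : K)
    (hμ : μ ^ ((2 ^ m) ^ 2 + 2 ^ m + 1) = 1) :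
    Nat.card {x : K | x ^ 2 ^ (m + s) + μ * x ^ 2 ^ s + x = 0} ≤ 2 ^ 2 := by
  -- characteristic 2
  haveI hfact : Fact (Nat.Prime 2) := ⟨Nat.prime_two⟩
  have hchar2 : CharP K 2 := by
    haveI hcp : CharP K (ringChar K) := ringChar.charP K
    have hcard0 : ((Fintype.card K : ℕ) : K) = 0 := FiniteField.cast_card_eq_zero K
    rw [hK] at hcard0
    push_cast at hcard0
    have h20 : (2 : K) = 0 :=
      (pow_eq_zero_iff (Nat.mul_pos (by norm_num) hm).ne').mp hcard0
    have hdvd : ringChar K ∣ 2 := (CharP.cast_eq_zero_iff K (ringChar K) 2).mp (by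
      exact_mod_cast h20)
    have hne1 : ringChar K ≠ 1 := CharP.ringChar_ne_one
    have : ringChar K = 2 := by
      rcases (Nat.prime_two).eq_one_or_self_of_dvd _ hdvd with h | h
      · exact absurd h hne1
      · exact h
    rwa [this] at hcp
  haveI := hchar2
  have hself : ∀ t : K, t + t = 0 := fun t => by
    rw [← two_mul, show (2:K) = ((2:ℕ):K) by norm_num, CharP.cast_eq_zero K 2, zero_mul]
  have hcancel : ∀ t u : K, t + u = 0 → t = u := by
    intro t u h
    have := hself u
    linear_combination h - this
  have fr : ∀ (u v : K) (k : ℕ), (u + v) ^ 2 ^ k = u ^ 2 ^ k + v ^ 2 ^ k := fun u v k =>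
    add_pow_char_pow u v 2 k
  have h3m : ∀ w : K, w ^ 2 ^ (3*m) = w := fun w => by
    rw [← hK]; exact FiniteField.pow_card w
  have hμ0 : μ ≠ 0 := by
    intro h; rw [h, zero_pow (by positivity)] at hμ; exact zero_ne_one hμ
  have hq2 : (2:ℕ) ^ m * 2 ^ m = 2 ^ (2*m) := by rw [← pow_add, two_mul]
  have hqs : (2:ℕ) ^ s * 2 ^ m = 2 ^ (m+s) := by rw [← pow_add, Nat.add_comm]
  have hratio : ∀ r : K, r ^ 2 ^ m = r → r ^ 2 ^ s = r → r = 0 ∨ r = 1 := by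
    intro r h1 h2
    have h3 := period_gcd' r s m h2 h1
    rw [hgcd] at h3
    have h4 : r * (r - 1) = 0 := by
      have h5 : r ^ 2 = r := by simpa using h3
      linear_combination h5
    rcases mul_eq_zero.mp h4 with h | h
    · exact Or.inl h
    · exact Or.inr (by linear_combination h)
  -- scaling lemma
  have hscale : ∀ β w : K, β ^ 2 ^ m = β →
      w ^ 2 ^ (m+s) + μ * w ^ 2 ^ s + w = 0 →
      (β*w) ^ 2 ^ (m+s) + μ * (β*w) ^ 2 ^ s + (β*w) = (β ^ 2 ^ s + β) * w := by
    intro β w hβ hw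
    have hB : w ^ 2 ^ (m+s) = μ * w ^ 2 ^ s + w := by
      rw [add_assoc] at hw; exact hcancel _ _ hw
    have hβs : β ^ 2 ^ (m+s) = β ^ 2 ^ s := by
      rw [← hqs, Nat.mul_comm, pow_mul, hβ]
    calc (β*w) ^ 2 ^ (m+s) + μ * (β*w) ^ 2 ^ s + (β*w)
        = β ^ 2 ^ s * (μ * w ^ 2 ^ s + w) + μ * β ^ 2 ^ s * w ^ 2 ^ s + β * w := by
          rw [mul_pow, mul_pow, hβs, hB]; ring
      _ = (β ^ 2 ^ s + β) * w + (μ * β ^ 2 ^ s * w ^ 2 ^ s + μ * β ^ 2 ^ s * w ^ 2 ^ s) := by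
          ring
      _ = (β ^ 2 ^ s + β) * w := by rw [hself (μ * β ^ 2 ^ s * w ^ 2 ^ s), add_zero]
  have hfinish : ∀ δ w v : K, δ ^ 2 ^ m = δ →
      w ^ 2 ^ (m+s) + μ * w ^ 2 ^ s + w = 0 → w ≠ 0 → v = δ * w →
      v ^ 2 ^ (m+s) + μ * v ^ 2 ^ s + v = 0 → v = 0 ∨ v = w := by
    intro δ w v hδ hw hw0 hv hv0
    have h1 := hscale δ w hδ hw
    rw [← hv, hv0] at h1
    have hδ2 : δ ^ 2 ^ s + δ = 0 := by
      rcases mul_eq_zero.mp h1.symm with h | h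
      · exact h
      · exact absurd h hw0
    rcases hratio δ hδ (hcancel _ _ hδ2) with h | h
    · exact Or.inl (by rw [hv, h, zero_mul])
    · exact Or.inr (by rw [hv, h, one_mul])
  -- the key consequence of the norm condition
  set c₁ : K := μ ^ 2 ^ (2*m) with hc₁
  set c₀ : K := μ ^ 2 ^ (2*m) * μ ^ 2 ^ m with hc₀
  have hc₀0 : c₀ ≠ 0 := mul_ne_zero (pow_ne_zero _ hμ0) (pow_ne_zero _ hμ0)
  have hnorm : c₁ * μ ^ 2 ^ m * μ = 1 := by
    rw [hc₁, ← pow_add, ← pow_succ]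
    rw [show (2:ℕ)^(2*m) = (2^m)^2 by rw [Nat.mul_comm, pow_mul]]
    exact hμ
  have hG : ∀ w : K, w ^ 2 ^ (m+s) + μ * w ^ 2 ^ s + w = 0 →
      w ^ 2 ^ (2*m) = c₁ * w ^ 2 ^ m + c₀ * w := by
    intro w hw
    have hB : w ^ 2 ^ (m+s) = μ * w ^ 2 ^ s + w := by
      rw [add_assoc] at hw; exact hcancel _ _ hw
    have key1 : w ^ 2 ^ s =
        (c₁ * μ ^ 2 ^ m * μ) * w ^ 2 ^ s + c₁ * μ ^ 2 ^ m * w + c₁ * w ^ 2 ^ m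
          + w ^ 2 ^ (2*m) := by
      calc w ^ 2 ^ s = (w ^ 2 ^ (3*m)) ^ 2 ^ s := by rw [h3m w]
        _ = w ^ (2 ^ (3*m) * 2 ^ s) := by rw [← pow_mul]
        _ = ((w ^ 2 ^ (m+s)) ^ 2 ^ m) ^ 2 ^ m := by
            rw [← pow_mul, ← pow_mul]
            congr 1
            rw [← pow_add, ← pow_add, ← pow_add]
            congr 1
            ring
        _ = ((μ * w ^ 2 ^ s + w) ^ 2 ^ m) ^ 2 ^ m := by rw [hB]
        _ = (μ ^ 2 ^ m * w ^ 2 ^ (m+s) + w ^ 2 ^ m) ^ 2 ^ m := by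
            rw [fr, mul_pow, ← pow_mul, hqs]
        _ = (μ ^ 2 ^ m) ^ 2 ^ m * (w ^ 2 ^ (m+s)) ^ 2 ^ m + (w ^ 2 ^ m) ^ 2 ^ m := by
            rw [fr, mul_pow]
        _ = (μ ^ 2 ^ m) ^ 2 ^ m * ((μ * w ^ 2 ^ s + w) ^ 2 ^ m) + w ^ 2 ^ (2*m) := by
            rw [hB, ← pow_mul w, hq2]
        _ = c₁ * (μ ^ 2 ^ m * w ^ 2 ^ (m+s) + w ^ 2 ^ m) + w ^ 2 ^ (2*m) := by
            rw [fr, mul_pow, ← pow_mul w, hqs, ← pow_mul μ, hq2, hc₁]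
        _ = c₁ * (μ ^ 2 ^ m * (μ * w ^ 2 ^ s + w) + w ^ 2 ^ m) + w ^ 2 ^ (2*m) := by
            rw [hB]
        _ = (c₁ * μ ^ 2 ^ m * μ) * w ^ 2 ^ s + c₁ * μ ^ 2 ^ m * w + c₁ * w ^ 2 ^ m
              + w ^ 2 ^ (2*m) := by ring
    have h0 : w ^ 2 ^ (2*m) + (c₁ * w ^ 2 ^ m + c₀ * w) = 0 := by
      rw [hc₀]
      linear_combination - key1 - (w ^ 2 ^ s) * hnorm
    exact hcancel _ _ h0
  -- extract five elements
  by_contra hcon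
  push_neg at hcon
  set S : Set K := {x : K | x ^ 2 ^ (m + s) + μ * x ^ 2 ^ s + x = 0} with hSdef
  have hS5 : 4 < S.ncard := by
    have := hcon
    rw [Nat.card_coe_set_eq] at this
    simpa using this
  have hex : ∀ T : Set K, T.ncard ≤ 4 → ∃ w ∈ S, w ∉ T := by
    intro T hT
    by_contra h
    push_neg at h
    have hsub : S ⊆ T := fun w hw => h w hw
    have := Set.ncard_le_ncard hsub (Set.toFinite T)
    omega
  obtain ⟨x, hxS, hx'⟩ := hex {0} (by simp)
  obtain ⟨y, hyS, hy'⟩ := hex {0, x} (by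
    refine le_trans (Set.ncard_insert_le _ _) ?_
    simp)
  obtain ⟨z, hzS, hz'⟩ := hex {0, x, y, x + y} (by
    refine le_trans (Set.ncard_insert_le _ _) ?_
    have h2 := Set.ncard_insert_le x ({y, x+y} : Set K)
    have h3 := Set.ncard_insert_le y ({x+y} : Set K)
    simp only [Set.ncard_singleton] at h3 ⊢
    omega)
  simp only [Set.mem_insert_iff, Set.mem_singleton_iff, not_or] at hx' hy' hz'
  have hx0 : x ≠ 0 := hx'
  obtain ⟨hy0, hyx⟩ := hy'
  obtain ⟨hz0, hzx, hzy, hzxy⟩ := hz'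
  simp only [hSdef, Set.mem_setOf_eq] at hxS hyS hzS
  -- Moore-type relation
  have hGx := hG x hxS
  have hGy := hG y hyS
  have hGz := hG z hzS
  set a : K := y ^ 2 ^ m * z + y * z ^ 2 ^ m with ha
  set b : K := z ^ 2 ^ m * x + z * x ^ 2 ^ m with hb
  set c : K := x ^ 2 ^ m * y + x * y ^ 2 ^ m with hc
  have habc : ∀ u v : K, u ^ 2 ^ (2*m) = c₁ * u ^ 2 ^ m + c₀ * u →
      v ^ 2 ^ (2*m) = c₁ * v ^ 2 ^ m + c₀ * v →
      (u ^ 2 ^ m * v + u * v ^ 2 ^ m) ^ 2 ^ m = c₀ * (u ^ 2 ^ m * v + u * v ^ 2 ^ m) := by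
    intro u v hu hv
    calc (u ^ 2 ^ m * v + u * v ^ 2 ^ m) ^ 2 ^ m
        = (u ^ 2 ^ m) ^ 2 ^ m * v ^ 2 ^ m + u ^ 2 ^ m * (v ^ 2 ^ m) ^ 2 ^ m := by
          rw [fr, mul_pow, mul_pow]
      _ = u ^ 2 ^ (2*m) * v ^ 2 ^ m + u ^ 2 ^ m * v ^ 2 ^ (2*m) := by
          rw [← pow_mul u, ← pow_mul v, hq2]
      _ = (c₁ * u ^ 2 ^ m + c₀ * u) * v ^ 2 ^ m + u ^ 2 ^ m * (c₁ * v ^ 2 ^ m + c₀ * v) := by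
          rw [hu, hv]
      _ = c₀ * (u ^ 2 ^ m * v + u * v ^ 2 ^ m)
            + (c₁ * (u ^ 2 ^ m * v ^ 2 ^ m) + c₁ * (u ^ 2 ^ m * v ^ 2 ^ m)) := by ring
      _ = c₀ * (u ^ 2 ^ m * v + u * v ^ 2 ^ m) := by
          rw [hself (c₁ * (u ^ 2 ^ m * v ^ 2 ^ m)), add_zero]
  have haq : a ^ 2 ^ m = c₀ * a := habc y z hGy hGz
  have hbq : b ^ 2 ^ m = c₀ * b := habc z x hGz hGx
  have hcq : c ^ 2 ^ m = c₀ * c := habc x y hGx hGy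
  have hrel : a * x + b * y + c * z = 0 := by
    calc a * x + b * y + c * z
        = (x * y ^ 2 ^ m * z + x * y ^ 2 ^ m * z) + (x * y * z ^ 2 ^ m + x * y * z ^ 2 ^ m)
          + (x ^ 2 ^ m * y * z + x ^ 2 ^ m * y * z) := by rw [ha, hb, hc]; ring
      _ = 0 := by
          rw [hself (x * y ^ 2 ^ m * z), hself (x * y * z ^ 2 ^ m), hself (x ^ 2 ^ m * y * z)]
          simp
  -- case analysis
  by_cases hbz : b = 0
  · -- x is an F_q-multiple of z
    have hb0 : z ^ 2 ^ m * x = z * x ^ 2 ^ m := by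
      have : z ^ 2 ^ m * x + z * x ^ 2 ^ m = 0 := by rw [← hb, hbz]
      exact hcancel _ _ this
    set α : K := x / z with hα
    have hαq : α ^ 2 ^ m = α := by
      rw [hα, div_pow]
      rw [div_eq_div_iff (pow_ne_zero _ hz0) hz0]
      linear_combination - hb0
    have hxz : x = α * z := by rw [hα, div_mul_cancel₀ _ hz0]
    rcases hfinish α z x hαq hzS hz0 hxz hxS with h | h
    · exact hx0 h
    · exact hzx h.symm
  · by_cases haz : a = 0
    · -- y is an F_q-multiple of z
      set γ : K := c / b with hγ
      have hγq : γ ^ 2 ^ m = γ := by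
        rw [hγ, div_pow, hcq, hbq, mul_div_mul_left _ _ hc₀0]
      have hyz : y = γ * z := by
        have h1 : b * y + c * z = 0 := by
          rw [haz, zero_mul, zero_add] at hrel; exact hrel
        have h2 : b * y = c * z := hcancel _ _ h1
        rw [hγ]
        field_simp
        linear_combination h2
      rcases hfinish γ z y hγq hzS hz0 hyz hyS with h | h
      · exact hy0 h
      · exact hzy h.symm
    · -- main case : a ≠ 0
      set β : K := b / a with hβ
      set γ : K := c / a with hγ
      have hβq : β ^ 2 ^ m = β := by
        rw [hβ, div_pow, hbq, haq, mul_div_mul_left _ _ hc₀0]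
      have hγq : γ ^ 2 ^ m = γ := by
        rw [hγ, div_pow, hcq, haq, mul_div_mul_left _ _ hc₀0]
      have hx_eq : x = β * y + γ * z := by
        have h1 : a * x = b * y + c * z := by
          rw [add_assoc] at hrel; exact hcancel _ _ hrel
        rw [hβ, hγ]
        field_simp
        linear_combination h1
      -- second relation
      have hfx : (β ^ 2 ^ s + β) * y + (γ ^ 2 ^ s + γ) * z = 0 := by
        have h1 := hscale β y hβq hyS
        have h2 := hscale γ z hγq hzS
        have hxexp : x ^ 2 ^ (m+s) + μ * x ^ 2 ^ s + x =
            ((β*y) ^ 2 ^ (m+s) + μ * (β*y) ^ 2 ^ s + (β*y))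
            + ((γ*z) ^ 2 ^ (m+s) + μ * (γ*z) ^ 2 ^ s + (γ*z)) := by
          rw [hx_eq, fr, fr]; ring
        rw [hxexp, h1, h2] at hxS
        exact hxS
      by_cases hb' : β ^ 2 ^ s + β = 0
      · by_cases hg' : γ ^ 2 ^ s + γ = 0
        · rcases hratio β hβq (hcancel _ _ hb') with h | h <;>
            rcases hratio γ hγq (hcancel _ _ hg') with h' | h' <;>
            rw [h, h'] at hx_eq <;> simp only [zero_mul, one_mul, add_zero, zero_add] at hx_eq
          · exact hx0 hx_eq
          · exact hzx hx_eq.symm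
          · exact hyx hx_eq.symm
          · refine hzxy ?_
            linear_combination - hx_eq - hself y
        · rw [hb', zero_mul, zero_add] at hfx
          rcases mul_eq_zero.mp hfx with h | h
          · exact hg' h
          · exact hz0 h
      · set δ : K := (γ ^ 2 ^ s + γ) / (β ^ 2 ^ s + β) with hδ
        have hδq : δ ^ 2 ^ m = δ := by
          have hnum : (γ ^ 2 ^ s + γ) ^ 2 ^ m = γ ^ 2 ^ s + γ := by
            rw [fr, ← pow_mul, Nat.mul_comm, pow_mul, hγq]
          have hden : (β ^ 2 ^ s + β) ^ 2 ^ m = β ^ 2 ^ s + β := by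
            rw [fr, ← pow_mul, Nat.mul_comm, pow_mul, hβq]
          rw [hδ, div_pow, hnum, hden]
        have hyz : y = δ * z := by
          have h1 : (β ^ 2 ^ s + β) * y = (γ ^ 2 ^ s + γ) * z := hcancel _ _ hfx
          rw [hδ]
          field_simp
          linear_combination h1
        rcases hfinish δ z y hδq hzS hz0 hyz hyS with h | h
        · exact hy0 h
        · exact hzy h.symm
end

section
/- Let m, s be positive integers such that gcd(s + m, 3m) = 1. For every η ∈ F_{2^{3m}} with η ≠ 1, there exist unique nonzero elements x₀, y₀ ∈ F_{2^{3m}} such that x₀^{2^s} = y₀ and x₀^{2^{s+m}} + x₀ = η · y₀^{2^m}. -/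
/-!
Writing `y₀ = x₀ ^ 2 ^ s`, the second equation becomes `x₀ ^ 2 ^ (s + m) + x₀ = η x₀ ^ 2 ^ (s + m)`,
i.e. `x₀ ^ (2 ^ (s + m) - 1) = (η - 1)⁻¹`. Since
`gcd (2 ^ (s + m) - 1, 2 ^ (3m) - 1) = 2 ^ gcd (s + m, 3m) - 1 = 1`, the power map
`x ↦ x ^ (2 ^ (s + m) - 1)` is a bijection of the unit group of order `2 ^ (3m) - 1`.
-/

theorem Nat.Coprime.two_pow_sub_one {b c : ℕ} (h : b.Coprime c) :
    (2 ^ b - 1).Coprime (2 ^ c - 1) := by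
  rw [Nat.Coprime, Nat.pow_sub_one_gcd_pow_sub_one, h.gcd_eq_one, pow_one]

theorem existsUnique_pow_eq_of_coprime_card_units {G₀ : Type*} [GroupWithZero G₀] {n : ℕ}
    (hn : (Nat.card G₀ˣ).Coprime n) {c : G₀} (hc : c ≠ 0) : ∃! x : G₀, x ≠ 0 ∧ x ^ n = c := by
  obtain ⟨u, hu, huniq⟩ := hn.pow_left_bijective.existsUnique (Units.mk0 c hc)
  refine ⟨u, ⟨u.ne_zero, by simpa using congrArg Units.val hu⟩, ?_⟩
  rintro x ⟨hx, hxn⟩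
  simpa using congrArg Units.val (huniq (Units.mk0 x hx) (Units.ext (by simpa using hxn)))

theorem pow_succ_add_self_eq_mul_pow_succ_iff {K : Type*} [Field K] {x η : K} (hx : x ≠ 0)
    (hη : η ≠ 1) (n : ℕ) : x ^ (n + 1) + x = η * x ^ (n + 1) ↔ x ^ n = (η - 1)⁻¹ := by
  rw [← mul_eq_one_iff_eq_inv₀ (sub_ne_zero.2 hη)]
  constructor
  · intro h
    apply mul_right_cancel₀ hx
    linear_combination -h
  · intro h
    linear_combination -x * h

theorem stmt6_general {K : Type*} [Field K] [Fintype K] (m s : ℕ)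
    (hgcd : Nat.gcd (s + m) (3 * m) = 1) (hK : Fintype.card K = 2 ^ (3 * m))
    (η : K) (hη : η ≠ 1) :
    ∃! p : K × K, p.1 ≠ 0 ∧ p.2 ≠ 0 ∧ p.1 ^ 2 ^ s = p.2 ∧
      p.1 ^ 2 ^ (s + m) + p.1 = η * p.2 ^ 2 ^ m := by
  set n := 2 ^ (s + m) - 1
  have hcop : (Nat.card Kˣ).Coprime n := by
    rw [Nat.card_units, Nat.card_eq_fintype_card, hK]
    exact (Nat.Coprime.two_pow_sub_one hgcd).symm
  have hsucc : 2 ^ (s + m) = n + 1 := (Nat.sub_add_cancel Nat.one_le_two_pow).symm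
  have equation_iff (x : K) (hx : x ≠ 0) :
      x ^ 2 ^ (s + m) + x = η * (x ^ 2 ^ s) ^ 2 ^ m ↔ x ^ n = (η - 1)⁻¹ := by
    rw [← pow_mul, ← pow_add, hsucc]
    exact pow_succ_add_self_eq_mul_pow_succ_iff hx hη n
  obtain ⟨x, ⟨hx, hxn⟩, huniq⟩ :=
    existsUnique_pow_eq_of_coprime_card_units hcop (inv_ne_zero (sub_ne_zero.2 hη))
  refine ⟨(x, x ^ 2 ^ s), ⟨hx, pow_ne_zero _ hx, rfl, (equation_iff x hx).2 hxn⟩, ?_⟩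
  rintro ⟨y, _⟩ ⟨hy : y ≠ 0, -, rfl : y ^ 2 ^ s = _, hyeq⟩
  rw [huniq y ⟨hy, (equation_iff y hy).1 hyeq⟩]

/-- Let `gcd(s+m, 3m) = 1`. For every `η ∈ F_{2^{3m}}` with `η ≠ 1`
there exists a unique pair of nonzero elements `(x₀, y₀)` of `F_{2^{3m}}` with
`x₀^{2^s} = y₀` and `x₀^{2^{s+m}} + x₀ = η · y₀^{2^m}`. -/
theorem stmt6 {K : Type*} [Field K] [Fintype K] (m s : ℕ) (hm : 0 < m) (hs : 0 < s)
    (hgcd : Nat.gcd (s + m) (3 * m) = 1) (hK : Fintype.card K = 2 ^ (3 * m))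
    (η : K) (hη : η ≠ 1) :
    ∃! p : K × K, p.1 ≠ 0 ∧ p.2 ≠ 0 ∧ p.1 ^ 2 ^ s = p.2 ∧
      p.1 ^ 2 ^ (s + m) + p.1 = η * p.2 ^ 2 ^ m :=
  stmt6_general m s hgcd hK η hη
end

section
/- Let m = 3t, 3 ∤ t, s with gcd(s,m) = 1 and 3 | (s − 1), and μ ∈ F_8 ⊂ F_{2^{3m}} a root of x³ + x + 1. Then the coefficients of the third iterate H³ of H(x) = μ x^{2^s} + x^{2^{s+m}} satisfy: μ^{1+2^s+2^{2s}} + 1 = 0, μ^{1+2^s} + μ^{1+2^{2s+m}} + μ^{2^{s+m}+2^{2s+m}} = 1, and μ + μ^{2^{s+m}} + μ^{2^{2s+2m}} = 0, so that H³(x) = x^{2^{3s+m}}. -/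
/-- Let `m = 3t`, `3 ∤ t`, `gcd(s,m) = 1`, `3 ∣ (s − 1)` and let
`μ ∈ F_8 ⊂ F_{2^{3m}}` be a root of `x³ + x + 1`. Then the coefficients of the
third iterate of `H(x) = μ x^{2^s} + x^{2^{s+m}}` satisfy
`μ^{1+2^s+2^{2s}} + 1 = 0`,
`μ^{1+2^s} + μ^{1+2^{2s+m}} + μ^{2^{s+m}+2^{2s+m}} = 1`,
`μ + μ^{2^{s+m}} + μ^{2^{2s+2m}} = 0`, so that `H^[3] x = x^{2^{3s+m}}`. -/
theorem stmt13 {K : Type*} [Field K] [Fintype K] (m s t : ℕ) (ht : 0 < t) (hs : 0 < s)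
    (hmt : m = 3 * t) (ht3 : ¬ (3 ∣ t)) (hgcd : Nat.gcd s m = 1)
    (hs3 : s % 3 = 1) (hK : Fintype.card K = 2 ^ (3 * m))
    (μ : K) (hμ : μ ^ 3 + μ + 1 = 0) :
    μ ^ (1 + 2 ^ s + 2 ^ (2 * s)) + 1 = 0 ∧
    μ ^ (1 + 2 ^ s) + μ ^ (1 + 2 ^ (2 * s + m)) + μ ^ (2 ^ (s + m) + 2 ^ (2 * s + m)) = 1 ∧
    μ + μ ^ 2 ^ (s + m) + μ ^ 2 ^ (2 * s + 2 * m) = 0 ∧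
    ∀ x : K, (fun y : K => μ * y ^ 2 ^ s + y ^ 2 ^ (s + m))^[3] x = x ^ 2 ^ (3 * s + m) := by
  have h3m : 3 * m ≠ 0 := by omega
  have h2 : (2 : K) = 0 := by
    have hc : ((Fintype.card K : ℕ) : K) = 0 := FiniteField.cast_card_eq_zero K
    rw [hK] at hc
    push_cast at hc
    exact pow_eq_zero_iff h3m |>.mp hc
  have hcube : μ ^ 3 = μ + 1 := by linear_combination hμ - (μ + 1) * h2
  have h7 : μ ^ 7 = 1 := by
    linear_combination (μ ^ 4 + μ ^ 2 + μ + 1) * hcube + (μ ^ 2 + μ) * h2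
  have hper : ∀ n : ℕ, μ ^ n = μ ^ (n % 7) := by
    intro n
    conv_lhs => rw [← Nat.div_add_mod n 7, pow_add, pow_mul, h7, one_pow, one_mul]
  have hp3 : ∀ n : ℕ, μ ^ 2 ^ n = μ ^ 2 ^ (n % 3) := by
    intro n
    rw [hper (2 ^ n), hper (2 ^ (n % 3))]
    congr 1
    conv_lhs => rw [← Nat.div_add_mod n 3]
    rw [pow_add, pow_mul, Nat.mul_mod, Nat.pow_mod]
    simp [Nat.mod_mod_of_dvd]
  have hA : μ ^ 2 ^ s = μ ^ 2 := by rw [hp3 s, hs3]; norm_num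
  have hB : μ ^ 2 ^ (s + m) = μ ^ 2 := by
    rw [hp3 (s + m), show (s + m) % 3 = 1 by omega]; norm_num
  have hC : μ ^ 2 ^ (2 * s) = μ ^ 4 := by
    rw [hp3 (2 * s), show (2 * s) % 3 = 2 by omega]; norm_num
  have hD : μ ^ 2 ^ (2 * s + m) = μ ^ 4 := by
    rw [hp3 (2 * s + m), show (2 * s + m) % 3 = 2 by omega]; norm_num
  have hE : μ ^ 2 ^ (2 * s + 2 * m) = μ ^ 4 := by
    rw [hp3 (2 * s + 2 * m), show (2 * s + 2 * m) % 3 = 2 by omega]; norm_num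
  refine ⟨?_, ?_, ?_, ?_⟩
  · rw [pow_add μ (1 + 2 ^ s) (2 ^ (2 * s)), pow_add μ 1 (2 ^ s), hA, hC, pow_one]
    linear_combination h7 + h2
  · rw [pow_add μ 1 (2 ^ s), pow_add μ 1 (2 ^ (2 * s + m)), pow_add μ (2 ^ (s + m)) (2 ^ (2 * s + m)), hA, hB, hD, pow_one]
    linear_combination (μ ^ 3 + μ ^ 2 + μ + 3) * hcube + (μ ^ 2 + 2 * μ + 1) * h2
  · rw [hB, hE]
    linear_combination μ * hcube + (μ ^ 2 + μ) * h2
  · intro x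
    have hrc : ringChar K = 2 := by
      have hd : ringChar K ∣ 2 := ringChar.dvd (by exact_mod_cast h2)
      have h1 : ringChar K ≠ 1 := CharP.ringChar_ne_one
      rcases (Nat.prime_two).eq_one_or_self_of_dvd _ hd with h | h
      · exact absurd h h1
      · exact h
    haveI : CharP K 2 := hrc ▸ ringChar.charP K
    haveI : Fact (Nat.Prime 2) := ⟨Nat.prime_two⟩
    have hfrob : ∀ (a b : K) (n : ℕ), (a + b) ^ 2 ^ n = a ^ 2 ^ n + b ^ 2 ^ n := by
      intro a b n; exact add_pow_char_pow a b 2 n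
    have hxm : ∀ y : K, y ^ 2 ^ (3 * m) = y := by
      intro y; rw [← hK]; exact FiniteField.pow_card y
    have hmulpow : ∀ (y : K) (a b : ℕ), (y ^ 2 ^ a) ^ 2 ^ b = y ^ 2 ^ (a + b) := by
      intro y a b; rw [← pow_mul, ← pow_add]
    have hW : x ^ 2 ^ (3 * s + 3 * m) = x ^ 2 ^ (3 * s) := by
      rw [show 3 * s + 3 * m = 3 * m + 3 * s by ring, ← hmulpow x (3 * m) (3 * s), hxm x]
    have hmu : ∀ (k n : ℕ), (μ ^ k) ^ 2 ^ n = (μ ^ 2 ^ n) ^ k := fun k n =>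
      pow_right_comm μ k (2 ^ n)
    have hsum3 : ∀ (a b c : K) (n : ℕ),
        (a + b + c) ^ 2 ^ n = a ^ 2 ^ n + b ^ 2 ^ n + c ^ 2 ^ n := by
      intro a b c n; rw [hfrob, hfrob]
    have hcoefA : (μ + μ ^ 2) ^ 2 ^ s = μ ^ 2 + μ ^ 4 := by
      rw [hfrob, hmu 2 s, hA]; ring
    have hcoefB : (μ + μ ^ 2) ^ 2 ^ (s + m) = μ ^ 2 + μ ^ 4 := by
      rw [hfrob, hmu 2 (s + m), hB]; ring
    have hm3A : (μ ^ 3) ^ 2 ^ s = μ ^ 6 := by rw [hmu 3 s, hA]; ring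
    have hm3B : (μ ^ 3) ^ 2 ^ (s + m) = μ ^ 6 := by rw [hmu 3 (s + m), hB]; ring
    have e2 : (μ * x ^ 2 ^ s + x ^ 2 ^ (s + m)) ^ 2 ^ s
        = μ ^ 2 * x ^ 2 ^ (2 * s) + x ^ 2 ^ (2 * s + m) := by
      rw [hfrob, mul_pow, hA, hmulpow x s s, hmulpow x (s + m) s,
        show s + s = 2 * s by ring, show s + m + s = 2 * s + m by ring]
    have e2' : (μ * x ^ 2 ^ s + x ^ 2 ^ (s + m)) ^ 2 ^ (s + m)
        = μ ^ 2 * x ^ 2 ^ (2 * s + m) + x ^ 2 ^ (2 * s + 2 * m) := by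
      rw [hfrob, mul_pow, hB, hmulpow x s (s + m), hmulpow x (s + m) (s + m),
        show s + (s + m) = 2 * s + m by ring, show s + m + (s + m) = 2 * s + 2 * m by ring]
    have e3 : μ * (μ ^ 2 * x ^ 2 ^ (2 * s) + x ^ 2 ^ (2 * s + m))
        + (μ ^ 2 * x ^ 2 ^ (2 * s + m) + x ^ 2 ^ (2 * s + 2 * m))
        = μ ^ 3 * x ^ 2 ^ (2 * s) + (μ + μ ^ 2) * x ^ 2 ^ (2 * s + m)
          + x ^ 2 ^ (2 * s + 2 * m) := by ring
    have e4 : (μ ^ 3 * x ^ 2 ^ (2 * s) + (μ + μ ^ 2) * x ^ 2 ^ (2 * s + m)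
        + x ^ 2 ^ (2 * s + 2 * m)) ^ 2 ^ s
        = μ ^ 6 * x ^ 2 ^ (3 * s) + (μ ^ 2 + μ ^ 4) * x ^ 2 ^ (3 * s + m)
          + x ^ 2 ^ (3 * s + 2 * m) := by
      rw [hsum3, mul_pow, mul_pow, hm3A, hcoefA, hmulpow x (2 * s) s,
        hmulpow x (2 * s + m) s, hmulpow x (2 * s + 2 * m) s,
        show 2 * s + s = 3 * s by ring, show 2 * s + m + s = 3 * s + m by ring,
        show 2 * s + 2 * m + s = 3 * s + 2 * m by ring]
    have e5 : (μ ^ 3 * x ^ 2 ^ (2 * s) + (μ + μ ^ 2) * x ^ 2 ^ (2 * s + m)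
        + x ^ 2 ^ (2 * s + 2 * m)) ^ 2 ^ (s + m)
        = μ ^ 6 * x ^ 2 ^ (3 * s + m) + (μ ^ 2 + μ ^ 4) * x ^ 2 ^ (3 * s + 2 * m)
          + x ^ 2 ^ (3 * s + 3 * m) := by
      rw [hsum3, mul_pow, mul_pow, hm3B, hcoefB, hmulpow x (2 * s) (s + m),
        hmulpow x (2 * s + m) (s + m), hmulpow x (2 * s + 2 * m) (s + m),
        show 2 * s + (s + m) = 3 * s + m by ring,
        show 2 * s + m + (s + m) = 3 * s + 2 * m by ring,
        show 2 * s + 2 * m + (s + m) = 3 * s + 3 * m by ring]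
    simp only [Function.iterate_succ, Function.iterate_zero, Function.comp_apply, id_eq]
    rw [e2, e2', e3, e4, e5, hW]
    linear_combination
      ((μ ^ 4 + μ ^ 2 + μ + 1) * x ^ 2 ^ (3 * s) + (μ ^ 3 + μ ^ 2 + μ + 3) * x ^ 2 ^ (3 * s + m)
        + μ * x ^ 2 ^ (3 * s + 2 * m)) * hcube
      + ((μ ^ 2 + μ + 1) * x ^ 2 ^ (3 * s) + (μ ^ 2 + 2 * μ + 1) * x ^ 2 ^ (3 * s + m)
        + (μ ^ 2 + μ) * x ^ 2 ^ (3 * s + 2 * m)) * h2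
end

section
/- Let q = 2^m, s ≥ 1, and f_μ(x) = x^{2^s q} + μ x^{2^s} + x over F_{q^3}. Suppose that for all μ ∈ F_{q^3} the F_2-dimension of ker(f_μ) is at most M, and suppose the number of pairs (x, y) ∈ (F_{q^3}^*)² with x ≠ y and (x^{2^s q}+x)/x^{2^s} = (y^{2^s q}+y)/y^{2^s} is at least N. Then the number of μ ∈ F_{q^3} for which f_μ is a permutation is at least 1 + N/(2^M − 1). -/
open Finset

/-- Let `q = 2^m`, `s ≥ 1`, `f_μ(x) = x^{2^s q} + μ x^{2^s} + x`
on `F_{q^3}`. If for all `μ` the `F_2`-dimension of `ker f_μ` is at most `M`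
(i.e. `|ker f_μ| ≤ 2^M`) and the number of pairs `(x,y)` of distinct nonzero
elements with `(x^{2^s q}+x)/x^{2^s} = (y^{2^s q}+y)/y^{2^s}` is at least `N`,
then the number of `μ` for which `f_μ` is a permutation is at least
`1 + N/(2^M − 1)`. -/
theorem stmt15 {K : Type*} [Field K] [Fintype K] (m s M N : ℕ) (hm : 0 < m) (hs : 1 ≤ s)
    (hK : Fintype.card K = 2 ^ (3 * m))
    (hM : ∀ μ : K,
      Nat.card {x : K | x ^ (2 ^ s * 2 ^ m) + μ * x ^ 2 ^ s + x = 0} ≤ 2 ^ M)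
    (hN : N ≤ Nat.card {p : K × K | p.1 ≠ 0 ∧ p.2 ≠ 0 ∧ p.1 ≠ p.2 ∧
      (p.1 ^ (2 ^ s * 2 ^ m) + p.1) / p.1 ^ 2 ^ s =
        (p.2 ^ (2 ^ s * 2 ^ m) + p.2) / p.2 ^ 2 ^ s}) :
    1 + N / (2 ^ M - 1) ≤ Nat.card {μ : K | Function.Bijective
      (fun x : K => x ^ (2 ^ s * 2 ^ m) + μ * x ^ 2 ^ s + x)} := by
  classical
  -- characteristic 2
  haveI : CharP K (ringChar K) := ringChar.charP K
  obtain ⟨n, hp, hcard⟩ := FiniteField.card K (ringChar K)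
  have hchar2 : ringChar K = 2 := by
    have hdvd : ringChar K ∣ 2 ^ (3 * m) := by
      rw [← hK, hcard]; exact dvd_pow_self _ (by positivity)
    have := hp.dvd_of_dvd_pow (n := 3 * m) (m := 2) (by simpa using hdvd)
    exact (Nat.prime_dvd_prime_iff_eq hp Nat.prime_two).mp this
  haveI hC2 : CharP K 2 := hchar2 ▸ ringChar.charP K
  haveI : Fact (Nat.Prime 2) := ⟨Nat.prime_two⟩
  set E : ℕ := 2 ^ s * 2 ^ m with hE
  have hEpow : E = 2 ^ (s + m) := by rw [hE, pow_add]
  set F : K → K → K := fun μ x => x ^ E + μ * x ^ 2 ^ s + x with hF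
  have hF0 : ∀ μ : K, F μ 0 = 0 := by
    intro μ
    simp [hF, hEpow, zero_pow (by positivity : (2:ℕ)^(s+m) ≠ 0), zero_pow (by positivity : (2:ℕ)^s ≠ 0)]
  -- additivity
  have hadd : ∀ μ x y : K, F μ (x + y) = F μ x + F μ y := by
    intro μ x y
    simp only [hF, hEpow]
    rw [add_pow_char_pow, show (2:ℕ)^s = 2^s from rfl]
    rw [add_pow_char_pow (p := 2) (n := s)]
    ring
  -- g
  set g : K → K := fun x => (x ^ E + x) / x ^ 2 ^ s with hg
  have claimA : ∀ (x : K), x ≠ 0 → ∀ μ : K, (F μ x = 0 ↔ g x = μ) := by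
    intro x hx μ
    have hxs : x ^ 2 ^ s ≠ 0 := pow_ne_zero _ hx
    rw [hg, div_eq_iff hxs]
    constructor
    · intro h
      have h' : (x ^ E + x) + μ * x ^ 2 ^ s = 0 := by rw [← h, hF]; ring
      exact CharTwo.add_eq_iff_eq_add.mp h' |>.trans (zero_add _)
    · intro h
      rw [hF]
      have : x ^ E + x = μ * x ^ 2 ^ s := h
      calc x ^ E + μ * x ^ 2 ^ s + x = (x ^ E + x) + μ * x ^ 2 ^ s := by ring
        _ = μ * x ^ 2 ^ s + μ * x ^ 2 ^ s := by rw [this]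
        _ = 0 := CharTwo.add_self_eq_zero _
  -- bijectivity criterion
  have claimB : ∀ μ : K, Function.Bijective (F μ) ↔ ∀ x : K, x ≠ 0 → F μ x ≠ 0 := by
    intro μ
    rw [← Finite.injective_iff_bijective]
    constructor
    · intro hinj x hx h0
      exact hx (hinj (h0.trans (hF0 μ).symm))
    · intro h x y hxy
      by_contra hne
      have hs0 : x + y ≠ 0 := by
        intro h0
        exact hne (CharTwo.add_eq_iff_eq_add.mp h0 |>.trans (zero_add _))
      apply h _ hs0
      rw [hadd, hxy]
      exact CharTwo.add_self_eq_zero _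
  -- finset setup
  set D : Finset K := Finset.univ.erase 0 with hD
  set S : K → Finset K := fun μ => D.filter (fun x => g x = μ) with hS
  set k : K → ℕ := fun μ => (S μ).card with hk
  have hmemS : ∀ μ x, x ∈ S μ ↔ x ≠ 0 ∧ g x = μ := by
    intro μ x; simp [hS, hD]
  have hDcard : D.card = Fintype.card K - 1 := by
    rw [hD, card_erase_of_mem (mem_univ _), card_univ]
  -- sum of k = card K - 1
  have hsum1 : ∑ μ : K, k μ = Fintype.card K - 1 := by
    rw [← hDcard]
    exact (Finset.card_eq_sum_card_fiberwise (fun x _ => mem_univ (g x))).symm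
  -- k bound
  have hkbound : ∀ μ : K, k μ + 1 ≤ 2 ^ M := by
    intro μ
    have h1 : insert (0:K) (S μ) ⊆ Finset.univ.filter (fun x => F μ x = 0) := by
      intro x hx
      rcases Finset.mem_insert.mp hx with rfl | hx
      · simp [hF0 μ]
      · obtain ⟨hx0, hgx⟩ := (hmemS μ x).mp hx
        simp [(claimA x hx0 μ).mpr hgx]
    have h0 : (0:K) ∉ S μ := by simp [hmemS]
    have := Finset.card_le_card h1
    rw [Finset.card_insert_of_notMem h0] at this
    refine this.trans ?_
    have := hM μ
    rwa [Nat.card_eq_fintype_card, Fintype.card_subtype] at this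
  -- bijective μ set
  set B : Finset K := Finset.univ.filter (fun μ => k μ = 0) with hB
  set T : Finset K := Finset.univ.filter (fun μ => k μ ≠ 0) with hT
  have hBT : B.card + T.card = Fintype.card K := by
    rw [hB, hT, ← card_univ]
    exact Finset.card_filter_add_card_filter_not _
  -- target card = B.card
  have htarget : Nat.card {μ : K | Function.Bijective
      (fun x : K => x ^ (2 ^ s * 2 ^ m) + μ * x ^ 2 ^ s + x)} = B.card := by
    rw [Nat.card_eq_fintype_card, Fintype.card_subtype, hB]
    congr 1
    apply Finset.filter_congr
    intro μ _
    show μ ∈ {μ : K | Function.Bijective (F μ)} ↔ k μ = 0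
    rw [Set.mem_setOf_eq, claimB μ]
    simp only [hk, Finset.card_eq_zero]
    constructor
    · intro h
      rw [Finset.eq_empty_iff_forall_notMem]
      intro x hx
      obtain ⟨hx0, hgx⟩ := (hmemS μ x).mp hx
      exact h x hx0 ((claimA x hx0 μ).mpr hgx)
    · intro h x hx0 hFx
      have : x ∈ S μ := (hmemS μ x).mpr ⟨hx0, (claimA x hx0 μ).mp hFx⟩
      rw [h] at this
      exact absurd this (Finset.notMem_empty x)
  -- pairs count
  have hNle : N ≤ ∑ μ : K, (k μ * k μ - k μ) := by
    refine hN.trans ?_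
    have hPcard : Nat.card {p : K × K | p.1 ≠ 0 ∧ p.2 ≠ 0 ∧ p.1 ≠ p.2 ∧
        (p.1 ^ (2 ^ s * 2 ^ m) + p.1) / p.1 ^ 2 ^ s =
        (p.2 ^ (2 ^ s * 2 ^ m) + p.2) / p.2 ^ 2 ^ s} =
        (Finset.univ.filter (fun p : K × K => p.1 ≠ 0 ∧ p.2 ≠ 0 ∧ p.1 ≠ p.2 ∧
          g p.1 = g p.2)).card := by
      rw [Nat.card_eq_fintype_card, Fintype.card_subtype]
      congr 1
    rw [hPcard]
    rw [Finset.card_eq_sum_card_fiberwise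
      (f := fun p : K × K => g p.1) (t := Finset.univ) (fun x _ => mem_univ _)]
    apply Finset.sum_le_sum
    intro μ _
    have heq : ((Finset.univ.filter (fun p : K × K => p.1 ≠ 0 ∧ p.2 ≠ 0 ∧ p.1 ≠ p.2 ∧
        g p.1 = g p.2)).filter (fun p => g p.1 = μ)) = (S μ).offDiag := by
      ext p
      simp only [Finset.mem_filter, Finset.mem_univ, true_and, Finset.mem_offDiag, hmemS]
      constructor
      · rintro ⟨⟨h1, h2, h3, h4⟩, h5⟩
        exact ⟨⟨h1, h5⟩, ⟨h2, h4 ▸ h5⟩, h3⟩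
      · rintro ⟨⟨h1, h5⟩, ⟨h2, h6⟩, h3⟩
        exact ⟨⟨h1, h2, h3, h5.trans h6.symm⟩, h5⟩
    rw [heq, Finset.offDiag_card]
  -- per-term bound
  have hterm : ∀ μ : K, k μ * k μ - k μ ≤ (2 ^ M - 1) * (k μ - 1) := by
    intro μ
    have hb : k μ ≤ 2 ^ M - 1 := by have := hkbound μ; omega
    calc k μ * k μ - k μ = k μ * (k μ - 1) := by rw [Nat.mul_sub, Nat.mul_one]
      _ ≤ (2 ^ M - 1) * (k μ - 1) := Nat.mul_le_mul_right _ hb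
  have hNle2 : N ≤ (2 ^ M - 1) * ∑ μ : K, (k μ - 1) := by
    rw [Finset.mul_sum]
    exact hNle.trans (Finset.sum_le_sum fun μ _ => hterm μ)
  -- sum of (k - 1)
  have hTT : ∀ μ : K, μ ∈ T ↔ k μ ≠ 0 := by
    intro μ; simp [hT]
  have h1 : ∑ μ : K, (k μ - 1) = ∑ μ ∈ T, (k μ - 1) := by
    refine (Finset.sum_subset (Finset.subset_univ T) ?_).symm
    intro x _ hx
    have : k x = 0 := by by_contra h; exact hx ((hTT x).mpr h)
    simp [this]
  have h3 : ∑ μ ∈ T, k μ = Fintype.card K - 1 := by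
    rw [← hsum1]
    refine Finset.sum_subset (Finset.subset_univ T) ?_
    intro x _ hx
    by_contra h
    exact hx ((hTT x).mpr h)
  have h2 : ∑ μ ∈ T, (k μ - 1) = (Fintype.card K - 1) - T.card := by
    rw [Finset.sum_tsub_distrib T (fun μ hμ => Nat.one_le_iff_ne_zero.mpr ((hTT μ).mp hμ))]
    simp [h3]
  have hTle : T.card ≤ Fintype.card K - 1 := by
    rw [← h3]
    have := Finset.card_nsmul_le_sum T k 1
      (fun μ hμ => Nat.one_le_iff_ne_zero.mpr ((hTT μ).mp hμ))
    simpa using this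
  have hK2 : 2 ≤ Fintype.card K := by
    rw [hK]
    calc 2 = 2 ^ 1 := (pow_one 2).symm
      _ ≤ 2 ^ (3 * m) := Nat.pow_le_pow_right (by norm_num) (by omega)
  have hB1 : 1 ≤ B.card := by omega
  have hfinal : N ≤ (2 ^ M - 1) * (B.card - 1) := by
    have : ∑ μ : K, (k μ - 1) = B.card - 1 := by
      rw [h1, h2]; omega
    rwa [this] at hNle2
  rw [htarget]
  rcases Nat.eq_zero_or_pos (2 ^ M - 1) with hd | hd
  · rw [hd, Nat.div_zero]; omega
  · have : N / (2 ^ M - 1) ≤ B.card - 1 := by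
      have := Nat.div_le_div_right (c := 2 ^ M - 1) hfinal
      rwa [Nat.mul_div_cancel_left _ hd] at this
    omega
end

section
/- Let q = 2^m, s ≥ 1 with gcd(s, m) = 1, and for μ ∈ F_{q^3} let n_i be the number of μ ∈ F_{q^3} with dim_{F_2} ker(f_μ) = i, where f_μ(x) = x^{2^s q} + μ x^{2^s} + x. Then n_0 + n_1 + n_2 + n_3 = q^3 and n_1 + 3 n_2 + 7 n_3 = q^3 − 1, hence n_0 = 1 + 2 n_2 + 6 n_3. -/
/-!
Each kernel `ker f_μ` is an additive subgroup of `K`, so its order is a power of `2`. Let `F` be the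
fixed field of `x ↦ x ^ 2 ^ m`; then `[K : F] ≤ 3`. For `c ∈ F` and `x ∈ ker f_μ` one has
`f_μ (c x) = (c - c ^ 2 ^ s) x`, so writing a kernel element in an `F`-basis taken from the kernel
forces every coordinate to satisfy `c ^ 2 ^ s = c = c ^ 2 ^ m`, i.e. `c ∈ 𝔽₂` as `gcd (s, m) = 1`.
Hence `|ker f_μ| ≤ 2 ^ 3`. Finally each `x ≠ 0` lies in exactly one kernel, which gives
`∑ μ, |ker f_μ| = 2 |K| - 1`.
-/

open Finset Module

theorem pow_eq_self_of_coprime {M : Type*} [Monoid M] {p s m : ℕ} {a : M}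
    (hs : a ^ p ^ s = a) (hm : a ^ p ^ m = a) (hsm : Nat.Coprime s m) : a ^ p = a := by
  have key : ∀ {k}, a ^ p ^ k = a → Function.IsPeriodicPt (· ^ p) k a := fun {k} h => by
    rwa [Function.IsPeriodicPt, Function.IsFixedPt, pow_iterate]
  simpa [Function.IsPeriodicPt, Function.IsFixedPt, hsm.gcd_eq_one] using (key hs).gcd (key hm)

theorem sum_comp_eq_sum_range_card_filter_mul {α : Type*} [Fintype α]
    {d : α → ℕ} {N : ℕ} (hd : ∀ a, d a < N) (f : ℕ → ℕ) :
    ∑ a, f (d a) = ∑ i ∈ range N, #{a | d a = i} * f i := by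
  rw [← sum_fiberwise_of_maps_to (g := d) (t := range N) fun a _ => mem_range.2 (hd a)]
  exact sum_congr rfl fun i _ => sum_const_nat fun a ha => by rw [(mem_filter.1 ha).2]

section

variable {K : Type*} [Field K]

theorem exists_subfield_finrank_le_three [Fintype K] [CharP K 2] {m : ℕ}
    (hK : Fintype.card K = 2 ^ (3 * m)) :
    ∃ F : Subfield K, (∀ c : F, c ^ 2 ^ m = c) ∧ finrank F K ≤ 3 := by
  let := ZMod.algebra K 2
  set τ := FiniteField.frobeniusAlgEquivOfAlgebraic (ZMod 2) K ^ m
  have hτ : ∀ x, τ x = x ^ 2 ^ m := fun x => by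
    simp [τ, AlgEquiv.coe_pow, FiniteField.coe_frobeniusAlgEquivOfAlgebraic_iterate]
  have hτ3 : τ ^ 3 = 1 := by
    ext x
    simp only [AlgEquiv.one_apply, pow_succ, pow_zero, one_mul, AlgEquiv.mul_apply, hτ, ← pow_mul,
      ← pow_add]
    convert FiniteField.pow_card x using 2
    rw [hK]; ring
  refine ⟨(IntermediateField.fixedField (Subgroup.zpowers τ)).toSubfield, fun c => ?_, ?_⟩
  · exact Subtype.ext ((hτ c).symm.trans (c.2 ⟨τ, Subgroup.mem_zpowers τ⟩))
  · calc finrank (IntermediateField.fixedField (Subgroup.zpowers τ)) K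
        = orderOf τ := by rw [IntermediateField.finrank_fixedField_eq_card, Nat.card_zpowers]
      _ ≤ 3 := orderOf_le_of_pow_eq_one (by norm_num) hτ3

def linearizedMap [CharP K 2] (s m : ℕ) (μ : K) : K →+ K where
  toFun x := x ^ (2 ^ s * 2 ^ m) + μ * x ^ 2 ^ s + x
  map_zero' := by simp
  map_add' x y := by
    simp only [← pow_add, add_pow_char_pow]
    ring

theorem linearizedMap_apply [CharP K 2] (s m : ℕ) (μ x : K) :
    linearizedMap s m μ x = x ^ (2 ^ s * 2 ^ m) + μ * x ^ 2 ^ s + x := rfl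

theorem linearizedMap_smul_of_mem_ker [CharP K 2] {s m : ℕ} {μ x : K}
    (hx : x ∈ (linearizedMap s m μ).ker) {F : Type*} [Field F] [Algebra F K] {c : F}
    (hc : c ^ 2 ^ m = c) : linearizedMap s m μ (c • x) = (c - c ^ 2 ^ s) • x := by
  rw [AddMonoidHom.mem_ker, linearizedMap_apply] at hx
  have hc' : algebraMap F K c ^ (2 ^ s * 2 ^ m) = algebraMap F K c ^ 2 ^ s := by
    rw [mul_comm, pow_mul, ← map_pow, hc]
  rw [linearizedMap_apply, Algebra.smul_def, Algebra.smul_def, map_sub, map_pow, mul_pow, mul_pow,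
    hc']
  linear_combination algebraMap F K c ^ 2 ^ s * hx

theorem card_ker_linearizedMap_le [CharP K 2] {s m : ℕ} (hsm : Nat.Coprime s m) (μ : K)
    {F : Type*} [Field F] [Algebra F K] [FiniteDimensional F K] (hF : ∀ c : F, c ^ 2 ^ m = c) :
    Nat.card (linearizedMap s m μ).ker ≤ 2 ^ finrank F K := by
  classical
  obtain ⟨b, hbV, hspan, hli⟩ := exists_linearIndependent F ((linearizedMap s m μ).ker : Set K)
  have : Finite b := hli.finite
  have : Fintype b := Fintype.ofFinite b
  have hsub : ((linearizedMap s m μ).ker : Set K) ⊆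
      Set.range fun t : Finset b => ∑ i ∈ t, (i : K) := by
    intro w hw
    have hw' : w ∈ Submodule.span F (Set.range ((↑) : b → K)) := by
      rw [Subtype.range_coe, hspan]; exact Submodule.subset_span hw
    obtain ⟨c, rfl⟩ := (Submodule.mem_span_range_iff_exists_fun F).1 hw'
    have hfix : ∀ i, c i ^ 2 ^ s = c i := by
      have hsum : ∑ i, (c i - c i ^ 2 ^ s) • (i : K) = 0 := by
        rw [← AddMonoidHom.mem_ker.1 hw, map_sum]
        exact sum_congr rfl fun i _ => (linearizedMap_smul_of_mem_ker (hbV i.2) (hF _)).symm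
      exact fun i => (sub_eq_zero.1 (Fintype.linearIndependent_iff.1 hli _ hsum i)).symm
    refine ⟨univ.filter (c · = 1), ?_⟩
    simp only [sum_filter]
    refine sum_congr rfl fun i _ => ?_
    have hidem : IsIdempotentElem (c i) := by
      rw [IsIdempotentElem, ← sq]; exact pow_eq_self_of_coprime (hfix i) (hF _) hsm
    rcases IsIdempotentElem.iff_eq_zero_or_one.1 hidem with h | h <;> simp [h]
  calc Nat.card (linearizedMap s m μ).ker
      ≤ Nat.card (Finset b) := (Nat.card_mono (Set.toFinite _) hsub).trans (Finite.card_range_le _)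
    _ = 2 ^ Fintype.card b := by rw [Nat.card_eq_fintype_card, Fintype.card_finset]
    _ ≤ 2 ^ finrank F K := Nat.pow_le_pow_right two_pos hli.fintype_card_le_finrank

theorem exists_card_ker_linearizedMap_eq_two_pow [Fintype K] [CharP K 2] {s m : ℕ}
    (hsm : Nat.Coprime s m) (hK : Fintype.card K = 2 ^ (3 * m)) (μ : K) :
    ∃ i < 4, Nat.card (linearizedMap s m μ).ker = 2 ^ i := by
  obtain ⟨F, hF, hrank⟩ := exists_subfield_finrank_le_three hK
  have hdvd : Nat.card (linearizedMap s m μ).ker ∣ 2 ^ (3 * m) := by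
    rw [← hK, ← Nat.card_eq_fintype_card]; exact AddSubgroup.card_addSubgroup_dvd_card _
  obtain ⟨i, -, hi⟩ := (Nat.dvd_prime_pow Nat.prime_two).1 hdvd
  have hle := (card_ker_linearizedMap_le hsm μ hF).trans (Nat.pow_le_pow_right two_pos hrank)
  rw [hi, Nat.pow_le_pow_iff_right (by norm_num)] at hle
  exact ⟨i, Nat.lt_succ_of_le hle, hi⟩

theorem card_filter_linearizedMap_eq_one [Fintype K] [DecidableEq K] [CharP K 2] (s m : ℕ)
    {x : K} (hx : x ≠ 0) : #{μ | linearizedMap s m μ x = 0} = 1 := by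
  have hμ : ∀ μ, linearizedMap s m μ x = 0 ↔ μ = -(x ^ (2 ^ s * 2 ^ m) + x) / x ^ 2 ^ s := by
    intro μ
    rw [linearizedMap_apply, eq_div_iff (pow_ne_zero _ hx)]
    constructor <;> intro h <;> linear_combination h
  simp only [hμ, filter_eq', mem_univ, if_true, card_singleton]

theorem sum_card_ker_linearizedMap [Fintype K] [CharP K 2] (s m : ℕ) :
    ∑ μ : K, Nat.card (linearizedMap s m μ).ker = 2 * Fintype.card K - 1 := by
  classical
  have hzero : #{μ : K | linearizedMap s m μ 0 = 0} = Fintype.card K := by simp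
  calc ∑ μ : K, Nat.card (linearizedMap s m μ).ker
      = ∑ μ : K, #{x | linearizedMap s m μ x = 0} := by
        simp only [Nat.card_eq_fintype_card, Fintype.card_subtype, AddMonoidHom.mem_ker]
    _ = ∑ x : K, #{μ | linearizedMap s m μ x = 0} :=
        sum_card_bipartiteAbove_eq_sum_card_bipartiteBelow _
    _ = Fintype.card K + ∑ x ∈ ({0}ᶜ : Finset K), 1 := by
        rw [Fintype.sum_eq_add_sum_compl 0, hzero]
        exact congrArg _ (sum_congr rfl fun x hx =>
          card_filter_linearizedMap_eq_one s m (by simpa using hx))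
    _ = Fintype.card K + (Fintype.card K - 1) := by
        rw [sum_const, card_compl, card_singleton, smul_eq_mul, mul_one]
    _ = 2 * Fintype.card K - 1 := by have := Fintype.card_pos (α := K); omega

end

theorem stmt16_general {K : Type*} [Field K] [Fintype K] (m s : ℕ)
    (hgcd : Nat.gcd s m = 1) (hK : Fintype.card K = 2 ^ (3 * m)) (n : ℕ → ℕ)
    (hn : ∀ i, n i = Nat.card {μ : K |
      Nat.card {x : K | x ^ (2 ^ s * 2 ^ m) + μ * x ^ 2 ^ s + x = 0} = 2 ^ i}) :
    n 0 + n 1 + n 2 + n 3 = (2 ^ m) ^ 3 ∧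
    n 1 + 3 * n 2 + 7 * n 3 = (2 ^ m) ^ 3 - 1 ∧
    n 0 = 1 + 2 * n 2 + 6 * n 3 := by
  have : CharP K 2 := charP_of_card_eq_prime_pow hK
  choose d hd4 hd using exists_card_ker_linearizedMap_eq_two_pow (K := K) hgcd hK
  have hker : ∀ μ, Nat.card {x : K | x ^ (2 ^ s * 2 ^ m) + μ * x ^ 2 ^ s + x = 0} = 2 ^ d μ := hd
  have hn' : ∀ i, n i = #{μ | d μ = i} := fun i => by
    simp only [hn, hker, (Nat.pow_right_injective le_rfl).eq_iff, Nat.card_eq_fintype_card,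
      Fintype.card_subtype, Set.mem_ofPred_eq]
  have hcard : Fintype.card K = (2 ^ m) ^ 3 := by rw [hK, ← pow_mul, mul_comm]
  have hcount := sum_comp_eq_sum_range_card_filter_mul hd4 fun _ => 1
  have hweight := sum_comp_eq_sum_range_card_filter_mul hd4 (2 ^ ·)
  simp only [← hd, sum_card_ker_linearizedMap, sum_const, card_univ, smul_eq_mul, hcard]
    at hcount hweight
  simp only [sum_range_succ, sum_range_zero, ← hn'] at hcount hweight
  have hpos := Nat.one_le_two_pow (n := 3 * m)
  omega

/-- Let `q = 2^m`, `gcd(s,m) = 1`, and for `i ∈ {0,1,2,3}` let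
`n i` be the number of `μ ∈ F_{q^3}` such that the kernel of
`f_μ(x) = x^{2^s q} + μ x^{2^s} + x` has `F_2`-dimension `i` (cardinality `2^i`).
Then `n 0 + n 1 + n 2 + n 3 = q^3`, `n 1 + 3 n 2 + 7 n 3 = q^3 − 1`, and
`n 0 = 1 + 2 n 2 + 6 n 3`. -/
theorem stmt16 {K : Type*} [Field K] [Fintype K] (m s : ℕ) (hm : 0 < m) (hs : 1 ≤ s)
    (hgcd : Nat.gcd s m = 1) (hK : Fintype.card K = 2 ^ (3 * m)) (n : ℕ → ℕ)
    (hn : ∀ i, n i = Nat.card {μ : K |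
      Nat.card {x : K | x ^ (2 ^ s * 2 ^ m) + μ * x ^ 2 ^ s + x = 0} = 2 ^ i}) :
    n 0 + n 1 + n 2 + n 3 = (2 ^ m) ^ 3 ∧
    n 1 + 3 * n 2 + 7 * n 3 = (2 ^ m) ^ 3 - 1 ∧
    n 0 = 1 + 2 * n 2 + 6 * n 3 :=
  stmt16_general m s hgcd hK n hn
end
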